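/- Let 𝒪 ⊆ ℂ be open, let φ: 𝒪 → ℂ be holomorphic, let C: 𝒪 → ℂ be continuous and nonvanishing, and let ε: (0,∞) × 𝒪 → ℂ satisfy ε(ħ, ·) → 0 as ħ → 0⁺ uniformly on compact subsets of 𝒪. Define J(ħ, x) := (C(x)/(2πħ)) · exp(i·φ(x)/(2πħ)) · (1 + ε(ħ, x)). Suppose a₀(M,q), …, a_d(M,q) are Laurent polynomials in M with coefficients in ℤ[q], and suppose there is ħ₀ > 0 such that for all 0 < ħ < ħ₀ and all x ∈ 𝒪 with x + 2πnħ ∈ 𝒪 for n = 0, …, d, one has Σ_{n=0}^d aₙ(e^{x/2}, e^{πħ}) · J(ħ, x + 2πnħ) = 0. Then for every x ∈ 𝒪: Σ_{n=0}^d aₙ(e^{x/2}, 1) · (exp(i·φ′(x)))ⁿ = 0. -/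

import Mathlib

open Real Filter

/-- The Jones function with semiclassical expansion
`J(ℏ, x) = (C(x)/(2πℏ)) exp(i φ(x)/(2πℏ)) (1 + ε(ℏ, x))`. -/
noncomputable def Jfun (C φ : ℂ → ℂ) (ε : ℝ → ℂ → ℂ) (hb : ℝ) (x : ℂ) : ℂ :=
  (C x / (2 * (π : ℂ) * (hb : ℂ))) *
    Complex.exp (Complex.I * φ x / (2 * (π : ℂ) * (hb : ℂ))) * (1 + ε hb x)

/-- Evaluation of a Laurent polynomial in `M` with coefficients in `ℤ[q]` at
complex numbers `M, q`. -/
noncomputable def laurentEval (p : LaurentPolynomial (Polynomial ℤ)) (M q : ℂ) : ℂ :=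
  p.coeff.sum fun e c => Polynomial.eval q (Polynomial.map (Int.castRingHom ℂ) c) * M ^ e

/-! Fix `x ∈ 𝒪` and multiply the annihilation relation at `x` by `2πħ e^{-iφ(x)/(2πħ)}`. The
`n`-th term becomes `aₙ(e^{x/2}, e^{πħ}) C(x + 2πnħ) e^{i(φ(x + 2πnħ) - φ(x))/(2πħ)} (1 + ε)`,
and since the phase is `i n` times a difference quotient of `φ`, it tends to
`aₙ(e^{x/2}, 1) C(x) e^{inφ'(x)}` as `ħ → 0⁺`. So `C(x) Σₙ aₙ(e^{x/2}, 1) e^{inφ'(x)} = 0`,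
and `C(x) ≠ 0`. -/

open Complex Topology

theorem continuous_laurentEval_right (p : LaurentPolynomial (Polynomial ℤ)) (M : ℂ) :
    Continuous fun q : ℂ => laurentEval p M q :=
  continuous_finsetSum _ fun e _ =>
    (Polynomial.map (Int.castRingHom ℂ) (p.coeff e)).continuous.mul continuous_const

theorem mul_cexp_mul_Jfun (C φ : ℂ → ℂ) (ε : ℝ → ℂ → ℂ) {hb : ℝ} (hb0 : hb ≠ 0) (x y : ℂ) :
    2 * π * hb * cexp (-(I * φ x) / (2 * π * hb)) * Jfun C φ ε hb y =
      C y * cexp (I * (φ y - φ x) / (2 * π * hb)) * (1 + ε hb y) := by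
  have hbC : (hb : ℂ) ≠ 0 := by exact_mod_cast hb0
  rw [Jfun, show I * (φ y - φ x) / (2 * π * hb) =
    -(I * φ x) / (2 * π * hb) + I * φ y / (2 * π * hb) by ring, Complex.exp_add]
  field_simp

theorem HasDerivAt.tendsto_sub_div_ofReal {φ : ℂ → ℂ} {φ' x : ℂ} (hφ : HasDerivAt φ φ' x)
    (c : ℂ) :
    Tendsto (fun t : ℝ => (φ (x + c * t) - φ x) / t) (𝓝[≠] 0) (𝓝 (c * φ')) := by
  have hline : HasDerivAt (fun w : ℂ => x + c * w) c 0 := by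
    simpa using ((hasDerivAt_id (0 : ℂ)).const_mul c).const_add x
  have hcomp : HasDerivAt (fun t : ℝ => φ (x + c * t)) (φ' * c) 0 :=
    (HasDerivAt.comp_of_eq 0 hφ hline (by simp)).comp_ofReal
  rw [mul_comm]
  refine hcomp.tendsto_slope_zero.congr fun t => ?_
  simp [div_eq_inv_mul]

theorem HasDerivAt.tendsto_cexp_phase {φ : ℂ → ℂ} {φ' x : ℂ} (hφ : HasDerivAt φ φ' x) (n : ℕ) :
    Tendsto (fun t : ℝ => cexp (I * (φ (x + 2 * π * n * t) - φ x) / (2 * π * t)))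
      (𝓝[>] 0) (𝓝 (cexp (I * φ') ^ n)) := by
  have hslope := (hφ.tendsto_sub_div_ofReal (2 * π * n)).mono_left
    (nhdsWithin_mono 0 fun t (ht : 0 < t) => ht.ne')
  have hphase := (hslope.const_mul (I / (2 * π))).cexp
  rw [← Complex.exp_nat_mul, show n * (I * φ') = I / (2 * π) * (2 * π * n * φ') by
    field_simp [Real.pi_ne_zero]]
  refine hphase.congr fun t => ?_
  congr 1
  ring

/-- The analytic core of Theorem 1.13 (AJ): if a `q`-difference operator
`Σₙ aₙ(M̂,q) L̂ⁿ` annihilates a Jones function with semiclassical asymptotics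
governed by `φ`, then `Σₙ aₙ(e^{x/2}, 1) (e^{iφ'(x)})ⁿ = 0` on `𝒪`. -/
theorem stmt_12 (𝒪 : Set ℂ) (h𝒪 : IsOpen 𝒪)
    (φ C : ℂ → ℂ) (hφ : DifferentiableOn ℂ φ 𝒪)
    (hC : ContinuousOn C 𝒪) (hC0 : ∀ x ∈ 𝒪, C x ≠ 0)
    (ε : ℝ → ℂ → ℂ)
    (hε : ∀ K : Set ℂ, K ⊆ 𝒪 → IsCompact K →
      TendstoUniformlyOn (fun hb x => ε hb x) (fun _ => 0)
        (nhdsWithin 0 (Set.Ioi (0 : ℝ))) K)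
    (d : ℕ) (a : Fin (d + 1) → LaurentPolynomial (Polynomial ℤ))
    (hb₀ : ℝ) (hhb₀ : 0 < hb₀)
    (hann : ∀ hb : ℝ, 0 < hb → hb < hb₀ → ∀ x ∈ 𝒪,
      (∀ n : Fin (d + 1), x + 2 * (π : ℂ) * ((n : ℕ) : ℂ) * (hb : ℂ) ∈ 𝒪) →
      ∑ n : Fin (d + 1),
        laurentEval (a n) (Complex.exp (x / 2)) (Complex.exp ((π : ℂ) * (hb : ℂ))) *
          Jfun C φ ε hb (x + 2 * (π : ℂ) * ((n : ℕ) : ℂ) * (hb : ℂ)) = 0) :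
    ∀ x ∈ 𝒪,
      ∑ n : Fin (d + 1),
        laurentEval (a n) (Complex.exp (x / 2)) 1 *
          Complex.exp (Complex.I * deriv φ x) ^ (n : ℕ) = 0 := by
  intro x hx
  set l := 𝓝[>] (0 : ℝ)
  set F : Fin (d + 1) → ℝ → ℂ := fun n t =>
    laurentEval (a n) (cexp (x / 2)) (cexp (π * t)) *
      (C (x + 2 * π * (n : ℕ) * t) *
        cexp (I * (φ (x + 2 * π * (n : ℕ) * t) - φ x) / (2 * π * t)) *
        (1 + ε t (x + 2 * π * (n : ℕ) * t)))
  have hshift (n : ℕ) : Tendsto (fun t : ℝ => x + 2 * π * n * t) l (𝓝 x) :=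
    ((by fun_prop : Continuous fun t : ℝ => x + 2 * π * n * t).tendsto' 0 x (by simp)).mono_left
      nhdsWithin_le_nhds
  have hq : Tendsto (fun t : ℝ => cexp (π * t)) l (𝓝 1) :=
    ((by fun_prop : Continuous fun t : ℝ => cexp (π * t)).tendsto' 0 1 (by simp)).mono_left
      nhdsWithin_le_nhds
  have hεloc : TendstoLocallyUniformlyOn ε 0 l 𝒪 :=
    (tendstoLocallyUniformlyOn_iff_forall_isCompact h𝒪).2 hε
  have hterm (n : Fin (d + 1)) : Tendsto (F n) l
      (𝓝 (laurentEval (a n) (cexp (x / 2)) 1 * (C x * cexp (I * deriv φ x) ^ (n : ℕ) * (1 + 0)))) :=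
    ((continuous_laurentEval_right _ _).tendsto 1 |>.comp hq).mul <|
      (((hC.continuousAt (h𝒪.mem_nhds hx)).tendsto.comp (hshift n)).mul
        ((hφ.differentiableAt (h𝒪.mem_nhds hx)).hasDerivAt.tendsto_cexp_phase n)).mul
      (tendsto_const_nhds.add (hεloc.tendsto_comp continuousWithinAt_const hx
        (h𝒪.nhdsWithin_eq hx ▸ hshift n)))
  have hvanish : ∀ᶠ t in l, ∑ n, F n t = 0 := by
    filter_upwards [Ioo_mem_nhdsGT hhb₀, eventually_all.2 fun n : Fin (d + 1) =>
      (hshift n).eventually (h𝒪.mem_nhds hx)] with t ht hmem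
    calc ∑ n, F n t
      _ = 2 * π * t * cexp (-(I * φ x) / (2 * π * t)) * ∑ n : Fin (d + 1),
          laurentEval (a n) (cexp (x / 2)) (cexp (π * t)) *
            Jfun C φ ε t (x + 2 * π * (n : ℕ) * t) := by
        rw [Finset.mul_sum]
        refine Finset.sum_congr rfl fun n _ => ?_
        rw [mul_left_comm, mul_cexp_mul_Jfun C φ ε ht.1.ne']
      _ = 0 := by rw [hann t ht.1 ht.2 x hx hmem, mul_zero]
  have hlim := tendsto_nhds_unique (tendsto_finsetSum _ fun n _ => hterm n)
    (tendsto_const_nhds.congr' (hvanish.mono fun _ h => h.symm))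
  simp only [add_zero, mul_one, mul_left_comm _ (C x), ← Finset.mul_sum] at hlim
  exact (mul_eq_zero.mp hlim).resolve_left (hC0 x hx)
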